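/- Let m ≥ n ≥ 2 and let T be a path forest with n paths of total order at most m² - (n-1)² + 1. Then T is m-burnable, unless T has order exactly m² - (n-1)² + 1 and T is the path forest with path orders m² - n² + 2 together with n - 1 paths of order 2. -/

import Mathlib

/-!
Balls of radii `r ∈ S` placed end to end cover a path of order `∑ r ∈ S, (2 * r + 1)`, so it
suffices to distribute the radii `0, …, m - 1`, of total diameter `m ^ 2`, among the paths with
enough diameter on each. This is done by induction on `m`. If every path has order at most
`2 (m - n) + 1`, one radius among `m - n, …, m - 1` per path suffices. Otherwise radius `m - 1`
goes to a longest path `P`: if `P` has order at most `2 m - 1` it is burnt completely and the other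
`n - 1` paths satisfy the bound for `m - 1`; if it is longer, `2 m - 1` vertices are cut off `P` and
the `n` remaining paths satisfy the bound for `m - 1`. The induction hypothesis fails only when the
reduced forest is exceptional, and then either the original forest is exceptional as well, or it
is one explicit forest that is covered directly.
-/

/-- A graph is `m`-burnable if its vertices can be covered by `m` balls of
radii `0, 1, ..., m-1`. -/
def IsBurnable {V : Type*} (G : SimpleGraph V) (m : ℕ) : Prop :=
  ∃ f : Fin m → V, ∀ v : V, ∃ i : Fin m, G.edist (f i) v ≤ (i.val : ℕ∞)

/-- The burning number of a graph: the least `k` such that the graph is `k`-burnable. -/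
noncomputable def burningNumber {V : Type*} (G : SimpleGraph V) : ℕ :=
  sInf {k : ℕ | IsBurnable G k}

/-- The path forest whose `i`-th path has `l i` vertices. -/
def pathForest {n : ℕ} (l : Fin n → ℕ) : SimpleGraph (Σ i : Fin n, Fin (l i)) where
  Adj x y := x.1 = y.1 ∧ Nat.dist x.2.val y.2.val = 1
  symm := by
    constructor
    rintro ⟨i, a⟩ ⟨j, b⟩ ⟨h1, h2⟩
    exact ⟨h1.symm, by rwa [Nat.dist_comm]⟩
  loopless := by
    constructor
    rintro ⟨i, a⟩ ⟨_, h⟩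
    simp [Nat.dist_self] at h

/-- The spider with head `none` and arms of lengths `l 0, ..., l (n-1)`
(arm lengths count vertices excluding the head). -/
def spider {n : ℕ} (l : Fin n → ℕ) : SimpleGraph (Option (Σ i : Fin n, Fin (l i))) where
  Adj x y :=
    match x, y with
    | none, none => False
    | none, some b => b.2.val = 0
    | some a, none => a.2.val = 0
    | some a, some b => a.1 = b.1 ∧ Nat.dist a.2.val b.2.val = 1
  symm := by
    constructor
    rintro (_ | ⟨i, a⟩) (_ | ⟨j, b⟩) h <;> simp_all [Nat.dist_comm]

  loopless := by
    constructor
    rintro (_ | ⟨i, a⟩) h <;> simp_all [Nat.dist_self]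

open Finset

theorem sum_range_two_mul_add_one (t : ℕ) : ∑ r ∈ range t, (2 * r + 1) = t ^ 2 := by
  induction t with
  | zero => rfl
  | succ t ih => rw [sum_range_succ, ih]; ring

theorem sum_Ico_two_mul_add_one {s t : ℕ} (h : s ≤ t) :
    ∑ r ∈ Ico s t, (2 * r + 1) = t ^ 2 - s ^ 2 := by
  have := sum_range_add_sum_Ico (fun r => 2 * r + 1) h
  rw [sum_range_two_mul_add_one, sum_range_two_mul_add_one] at this
  omega

theorem exists_centers_of_le_sum (S : Finset ℕ) {p : ℕ} (hp : 0 < p)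
    (hS : p ≤ ∑ r ∈ S, (2 * r + 1)) :
    ∃ c : ℕ → ℕ, (∀ r, c r < p) ∧ ∀ x < p, ∃ r ∈ S, Nat.dist (c r) x ≤ r := by
  induction S using Finset.cons_induction generalizing p with
  | empty => rw [sum_empty] at hS; omega
  | cons r₀ S hr₀ ih =>
    rw [sum_cons] at hS
    by_cases hfit : p ≤ 2 * r₀ + 1
    · refine ⟨fun _ => min r₀ (p - 1), fun _ => by dsimp only; omega,
        fun x hx => ⟨r₀, mem_cons_self _ _, ?_⟩⟩
      simp only [Nat.dist]; omega
    obtain ⟨c, hcp, hc⟩ := ih (p := p - (2 * r₀ + 1)) (by omega) (by omega)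
    refine ⟨fun r => if r = r₀ then r₀ else c r + (2 * r₀ + 1), fun r => ?_, fun x hx => ?_⟩
    · have := hcp r
      dsimp only
      split_ifs <;> omega
    by_cases hx₀ : x ≤ 2 * r₀
    · exact ⟨r₀, mem_cons_self _ _, by simp only [↓reduceIte, Nat.dist]; omega⟩
    obtain ⟨r, hr, hrx⟩ := hc (x - (2 * r₀ + 1)) (by omega)
    have hne : r ≠ r₀ := fun h => hr₀ (h ▸ hr)
    refine ⟨r, mem_cons.2 (Or.inr hr), ?_⟩
    simp only [if_neg hne, Nat.dist] at hrx ⊢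
    omega

theorem pathForest_edist_le_of_add {n : ℕ} (l : Fin n → ℕ) (i : Fin n) (k : ℕ) :
    ∀ x y : Fin (l i), y.val = x.val + k → (pathForest l).edist ⟨i, x⟩ ⟨i, y⟩ ≤ k := by
  induction k with
  | zero =>
    intro x y h
    rw [Fin.ext (by omega : x.val = y.val), SimpleGraph.edist_self, Nat.cast_zero]
  | succ k ih =>
    intro x y h
    let z : Fin (l i) := ⟨x.val + k, by omega⟩
    have hzy : (pathForest l).Adj ⟨i, z⟩ ⟨i, y⟩ := ⟨rfl, by simp only [z, Nat.dist]; omega⟩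
    calc (pathForest l).edist ⟨i, x⟩ ⟨i, y⟩
        ≤ (pathForest l).edist ⟨i, x⟩ ⟨i, z⟩ + (pathForest l).edist ⟨i, z⟩ ⟨i, y⟩ :=
          SimpleGraph.edist_triangle
      _ ≤ k + 1 := add_le_add (ih x z rfl) (SimpleGraph.edist_le_one_iff_adj_or_eq.2 (Or.inl hzy))
      _ = (k + 1 : ℕ) := by push_cast; rfl

theorem pathForest_edist_le {n : ℕ} (l : Fin n → ℕ) (i : Fin n) (x y : Fin (l i)) :
    (pathForest l).edist ⟨i, x⟩ ⟨i, y⟩ ≤ Nat.dist x y := by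
  rcases le_total x.val y.val with h | h
  · exact pathForest_edist_le_of_add l i _ x y (by simp only [Nat.dist]; omega)
  · rw [SimpleGraph.edist_comm, Nat.dist_comm]
    exact pathForest_edist_le_of_add l i _ y x (by simp only [Nat.dist]; omega)

/-- `a r` is the path that receives the ball of radius `r`. -/
def CoversPaths {n : ℕ} (m : ℕ) (l : Fin n → ℕ) (a : ℕ → Fin n) : Prop :=
  ∀ i, l i ≤ ∑ r ∈ (range m).filter (a · = i), (2 * r + 1)

theorem isBurnable_of_coversPaths {n m : ℕ} {l : Fin n → ℕ} {a : ℕ → Fin n}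
    (hl : ∀ i, 1 ≤ l i) (ha : CoversPaths m l a) : IsBurnable (pathForest l) m := by
  choose c hcl hc using fun i => exists_centers_of_le_sum _ (hl i) (ha i)
  refine ⟨fun r => ⟨a r, c (a r) r, hcl _ _⟩, ?_⟩
  rintro ⟨i, x⟩
  obtain ⟨r, hr, hrx⟩ := hc i x x.isLt
  obtain ⟨hrm, rfl⟩ := mem_filter.1 hr
  exact ⟨⟨r, mem_range.1 hrm⟩, (pathForest_edist_le l _ _ x).trans (by exact_mod_cast hrx)⟩

namespace CoversPaths

variable {n m : ℕ} {l l' : Fin n → ℕ} {a : ℕ → Fin n}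

theorem succ (ha : CoversPaths m l' a) (i : Fin n) (hi : l i ≤ l' i + (2 * m + 1))
    (hj : ∀ j ≠ i, l j ≤ l' j) : CoversPaths (m + 1) l (Function.update a m i) := by
  intro j
  rw [sum_filter, sum_range_succ, Function.update_self,
    sum_congr rfl fun r hr => by rw [Function.update_of_ne (mem_range.1 hr).ne], ← sum_filter]
  rcases eq_or_ne i j with rfl | hij
  · rw [if_pos rfl]; exact hi.trans (Nat.add_le_add_right (ha i) _)
  · rw [if_neg hij, add_zero]; exact (hj j (Ne.symm hij)).trans (ha j)

theorem succAbove {l : Fin (n + 1) → ℕ} (i : Fin (n + 1))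
    (ha : CoversPaths m (l ∘ i.succAbove) a) :
    CoversPaths m (Function.update l i 0) (i.succAbove ∘ a) := by
  intro j
  rcases eq_or_ne j i with rfl | hj
  · simp
  obtain ⟨k, rfl⟩ := Fin.exists_succAbove_eq hj
  simpa [Function.update_of_ne hj, Fin.succAbove_right_inj] using ha k

end CoversPaths

/-- Path `i` receives the single radius `m - (n + 1) + i`. -/
theorem exists_coversPaths_of_forall_le {n m : ℕ} {l : Fin (n + 1) → ℕ} (hnm : n + 1 ≤ m)
    (hl : ∀ i, l i ≤ 2 * (m - (n + 1)) + 1) : ∃ a, CoversPaths m l a := by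
  refine ⟨fun r => Fin.ofNat (n + 1) (r - (m - (n + 1))), fun i => ?_⟩
  have hri : m - (n + 1) + i ∈
      (range m).filter (fun r => Fin.ofNat (n + 1) (r - (m - (n + 1))) = i) := by
    simp only [mem_filter, mem_range, Nat.add_sub_cancel_left]
    exact ⟨by omega, Fin.ext (Nat.mod_eq_of_lt i.isLt)⟩
  exact (hl i).trans
    (le_trans (by omega) (single_le_sum (fun r _ => Nat.zero_le (2 * r + 1)) hri))

/-- This forest arises when cutting `2 * m + 1` vertices off a longest path `i₀` leaves an
exceptional forest. Path `i₀` takes the radii `0, n + 1, m - 1`, path `i` the radii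
`n + 2, …, m - 2` and `m`, and the `n` paths of order two the radii `1, …, n`. -/
theorem exists_coversPaths_of_two_long {n m : ℕ} {l : Fin (n + 2) → ℕ} {i₀ i : Fin (n + 2)}
    (hi : i ≠ i₀) (hnm : n + 3 ≤ m) (hli₀ : l i₀ ≤ 2 * m + 3)
    (hli : l i + (n + 2) ^ 2 ≤ m ^ 2 + 2)
    (hrest : ∀ j, j ≠ i₀ → j ≠ i → l j ≤ 2) : ∃ a, CoversPaths (m + 1) l a := by
  obtain ⟨k, rfl⟩ := Fin.exists_succAbove_eq hi
  let a : ℕ → Fin (n + 2) := fun r =>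
    if r = 0 ∨ r = n + 1 ∨ r = m - 1 then i₀
    else if h : r - 1 < n then i₀.succAbove (k.succAbove ⟨r - 1, h⟩) else i₀.succAbove k
  refine ⟨a, fun j => ?_⟩
  by_cases hj₀ : j = i₀
  · rw [hj₀]
    have hsub : {0, n + 1, m - 1} ⊆ (range (m + 1)).filter (a · = i₀) := by
      intro r hr
      simp only [mem_insert, mem_singleton] at hr
      simp only [mem_filter, mem_range, a, if_pos hr]
      exact ⟨by omega, trivial⟩
    refine hli₀.trans (le_trans ?_ (sum_le_sum_of_subset hsub))
    rw [sum_insert (by simp only [mem_insert, mem_singleton]; omega),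
      sum_insert (by simp only [mem_singleton]; omega), sum_singleton]
    omega
  by_cases hjk : j = i₀.succAbove k
  · rw [hjk]
    have hsub :
        insert m (Ico (n + 2) (m - 1)) ⊆ (range (m + 1)).filter (a · = i₀.succAbove k) := by
      intro r hr
      simp only [mem_insert, mem_Ico] at hr
      simp only [mem_filter, mem_range, a]
      rw [if_neg (by omega), dif_neg (by omega)]
      exact ⟨by omega, rfl⟩
    refine le_trans ?_ (sum_le_sum_of_subset hsub)
    rw [sum_insert (by simp), sum_Ico_two_mul_add_one (by omega)]
    have : (m - 1) ^ 2 + 2 * m = m ^ 2 + 1 := by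
      obtain ⟨m, rfl⟩ : ∃ m', m = m' + 1 := ⟨m - 1, by omega⟩
      simp only [Nat.add_sub_cancel]; ring
    have : (n + 2) ^ 2 ≤ (m - 1) ^ 2 := Nat.pow_le_pow_left (by omega) 2
    omega
  obtain ⟨k', rfl⟩ := Fin.exists_succAbove_eq hj₀
  obtain ⟨t, rfl⟩ := Fin.exists_succAbove_eq (fun h => hjk (congrArg i₀.succAbove h))
  have := t.isLt
  have ht : t.val + 1 ∈ (range (m + 1)).filter (a · = i₀.succAbove (k.succAbove t)) := by
    simp only [mem_filter, mem_range, a]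
    rw [if_neg (by omega), dif_pos (by omega)]
    exact ⟨by omega, rfl⟩
  exact (hrest _ hj₀ hjk).trans
    (le_trans (by omega) (single_le_sum (fun r _ => Nat.zero_le (2 * r + 1)) ht))

/-- Path orders `m ^ 2 - n ^ 2 + 2, 2, …, 2`, written without truncated subtraction. -/
def IsExceptional {n : ℕ} (m : ℕ) (l : Fin n → ℕ) : Prop :=
  ∃ i, l i + n ^ 2 = m ^ 2 + 2 ∧ ∀ j ≠ i, l j = 2

theorem sum_eq_of_forall_ne_eq_two {n : ℕ} {l : Fin (n + 1) → ℕ} {i : Fin (n + 1)}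
    (hrest : ∀ j ≠ i, l j = 2) : ∑ j, l j = l i + 2 * n := by
  rw [Fin.sum_univ_succAbove l i, sum_congr rfl fun j _ => hrest _ (Fin.succAbove_ne i j)]
  simp [mul_comm]

theorem isExceptional_succ_of_comp_succAbove {k m : ℕ} {l : Fin (k + 2) → ℕ} {i₀ : Fin (k + 2)}
    (hmax : ∀ j, l j ≤ l i₀) (hli₀ : l i₀ ≤ 2 * m + 1) (hkm : k + 1 ≤ m)
    (hsum : ∑ j, l j + (k + 1) ^ 2 ≤ (m + 1) ^ 2 + 1)
    (h : IsExceptional m (l ∘ i₀.succAbove)) : IsExceptional (m + 1) l := by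
  obtain ⟨j, hj, hrest⟩ := h
  simp only [Function.comp_apply] at hj hrest
  rw [Fin.sum_univ_succAbove l i₀, sum_eq_of_forall_ne_eq_two hrest] at hsum
  have hj₀ := hmax (i₀.succAbove j)
  have hmk : m ≤ k + 2 := by nlinarith
  obtain rfl : m = k + 1 := by
    by_contra hne
    obtain rfl : m = k + 2 := by omega
    nlinarith
  have hli₀ : l i₀ = 2 := by nlinarith
  refine ⟨i₀, by rw [hli₀]; ring, fun j' hj' => ?_⟩
  obtain ⟨j', rfl⟩ := Fin.exists_succAbove_eq hj'
  rcases eq_or_ne j' j with rfl | hj'j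
  · nlinarith
  · exact hrest j' hj'j

theorem exists_coversPaths_of_isExceptional_update {n m : ℕ} {l : Fin (n + 1) → ℕ}
    {i₀ : Fin (n + 1)} (hnm : n ≤ m) (hli₀ : 2 * m + 2 ≤ l i₀)
    (hexc : ¬ IsExceptional (m + 1) l)
    (h : IsExceptional m (Function.update l i₀ (l i₀ - (2 * m + 1)))) :
    ∃ a, CoversPaths (m + 1) l a := by
  obtain ⟨i, hi, hrest⟩ := h
  have hrest' : ∀ j, j ≠ i₀ → j ≠ i → l j = 2 := fun j hj₀ hj => by
    simpa [Function.update_of_ne hj₀] using hrest j hj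
  by_cases hii₀ : i = i₀
  · subst hii₀
    rw [Function.update_self] at hi
    exact absurd ⟨i, by rw [add_sq m]; omega, fun j hj => hrest' j hj hj⟩ hexc
  rw [Function.update_of_ne hii₀] at hi
  have hli₀ : l i₀ = 2 * m + 3 := by
    have := hrest i₀ (Ne.symm hii₀)
    rw [Function.update_self] at this
    omega
  obtain ⟨n, rfl⟩ : ∃ n', n = n' + 1 := ⟨n - 1, by have := Fin.ext_iff.not.1 hii₀; omega⟩
  have hnm' : n + 3 ≤ m := by
    by_contra hlt
    rcases (by omega : m = n + 1 ∨ m = n + 2) with rfl | rfl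
    · nlinarith
    · refine hexc ⟨i₀, by rw [hli₀]; ring, fun j hj => ?_⟩
      by_cases hji : j = i
      · rw [hji]; nlinarith
      · exact hrest' j hj hji
  exact exists_coversPaths_of_two_long hii₀ hnm' hli₀.le hi.le
    fun j hj₀ hj => (hrest' j hj₀ hj).le

theorem exists_coversPaths {m n : ℕ} (l : Fin (n + 1) → ℕ) (hl : ∀ i, 1 ≤ l i)
    (hsum : ∑ i, l i + n ^ 2 ≤ m ^ 2 + 1) (hexc : ¬ IsExceptional m l) :
    ∃ a, CoversPaths m l a := by
  induction m generalizing n with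
  | zero =>
    have hcard : n + 1 ≤ ∑ i, l i := by simpa using card_nsmul_le_sum univ l 1 fun i _ => hl i
    obtain rfl : n = 0 := by nlinarith
    refine absurd ⟨0, ?_, fun j hj => absurd (Fin.fin_one_eq_zero j) hj⟩ hexc
    simp only [Fin.sum_univ_succ, Fin.sum_univ_zero] at hsum
    have := hl 0
    omega
  | succ m ih =>
    obtain ⟨i₀, hmax⟩ := Finite.exists_max l
    have hcard : n + 1 ≤ ∑ i, l i := by simpa using card_nsmul_le_sum univ l 1 fun i _ => hl i
    have hnm : n ≤ m := by nlinarith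
    by_cases hshort : l i₀ ≤ 2 * (m + 1 - (n + 1)) + 1
    · exact exists_coversPaths_of_forall_le (by omega) fun i => (hmax i).trans hshort
    have hsplit := Fin.sum_univ_succAbove l i₀
    by_cases hmid : l i₀ ≤ 2 * m + 1
    · obtain ⟨k, rfl⟩ : ∃ k, n = k + 1 := ⟨n - 1, by omega⟩
      obtain ⟨a, ha⟩ := ih (l ∘ i₀.succAbove) (fun _ => hl _)
        (by simp only [Function.comp_apply]; rw [add_sq, add_sq] at hsum; omega)
        fun h => hexc (isExceptional_succ_of_comp_succAbove hmax hmid hnm hsum h)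
      exact ⟨_, (ha.succAbove i₀).succ i₀ (by simpa using hmid)
        fun j hj => by rw [Function.update_of_ne hj]⟩
    set l' := Function.update l i₀ (l i₀ - (2 * m + 1))
    by_cases hexc' : IsExceptional m l'
    · exact exists_coversPaths_of_isExceptional_update hnm (by omega) hexc hexc'
    have hl' : ∀ j ≠ i₀, l' j = l j := fun j hj => Function.update_of_ne hj _ _
    obtain ⟨a, ha⟩ := ih l' (fun j => by
        rcases eq_or_ne j i₀ with rfl | hj
        · simp only [l', Function.update_self]; omega
        · rw [hl' j hj]; exact hl j)
      (by
        rw [Fin.sum_univ_succAbove l' i₀, sum_congr rfl fun j _ => hl' _ (Fin.succAbove_ne i₀ j)]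
        simp only [l', Function.update_self]
        rw [add_sq] at hsum
        omega)
      hexc'
    exact ⟨_, ha.succ i₀ (by simp only [l', Function.update_self]; omega)
      fun j hj => (hl' j hj).ge⟩

/-- A path forest with `n` paths (`m ≥ n ≥ 2`) of total order at most
`m² - (n-1)² + 1` is `m`-burnable, unless it is the path forest with path orders
`m² - n² + 2, 2, ..., 2`. -/
theorem stmt12 (m n : ℕ) (hn : 2 ≤ n) (hm : n ≤ m) (l : Fin n → ℕ)
    (hl : ∀ i, 1 ≤ l i)
    (horder : ∑ i, l i ≤ m ^ 2 - (n - 1) ^ 2 + 1)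
    (hexc : ¬ ∃ i : Fin n, l i = m ^ 2 - n ^ 2 + 2 ∧ ∀ j, j ≠ i → l j = 2) :
    IsBurnable (pathForest l) m := by
  obtain ⟨k, rfl⟩ : ∃ k, n = k + 1 := ⟨n - 1, by omega⟩
  have hkm : k ^ 2 ≤ m ^ 2 := Nat.pow_le_pow_left (by omega) 2
  have hnm : (k + 1) ^ 2 ≤ m ^ 2 := Nat.pow_le_pow_left hm 2
  rw [Nat.add_sub_cancel] at horder
  obtain ⟨a, ha⟩ := exists_coversPaths (m := m) l hl (by omega)
    fun ⟨i, hi, hrest⟩ => hexc ⟨i, by omega, hrest⟩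
  exact isBurnable_of_coversPaths hl ha
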